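/- Let n ≥ 1, 0 ≤ m ≤ n, and let T = conv(v₀,…,v_m) be an m-simplex in ℝⁿ with rational vertices. Then T is regular if and only if for every nonempty face F of T and every rational point r lying in the relative interior of F, the denominator of r is greater than or equal to the sum of the denominators of the vertices of F. -/

import Mathlib

/-- `y` is in the `GL(n,ℤ) ⋉ ℤⁿ`-orbit of `x`, i.e. `y = U x + t` for an integer
matrix `U` with `det U = ±1` and an integer vector `t`. -/
def SameOrbit (n : ℕ) (x y : Fin n → ℝ) : Prop :=
  ∃ (U : Matrix (Fin n) (Fin n) ℤ) (t : Fin n → ℤ),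
    (U.det = 1 ∨ U.det = -1) ∧
    ∀ i, y i = (∑ j, (U i j : ℝ) * x j) + (t i : ℝ)

/-- The subgroup `G_x = ℤ + ℤx₁ + ⋯ + ℤxₙ` of the additive reals. -/
def Gx {n : ℕ} (x : Fin n → ℝ) : AddSubgroup ℝ :=
  AddSubgroup.closure (insert (1 : ℝ) (Set.range x))

/-- A point of `ℝⁿ` is rational if all its coordinates are rational. -/
def IsRationalPoint {n : ℕ} (y : Fin n → ℝ) : Prop :=
  ∀ i, ∃ q : ℚ, y i = (q : ℝ)

/-- The denominator of a rational point: the least positive integer `d`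
with `d • y ∈ ℤⁿ`. -/
noncomputable def den {n : ℕ} (y : Fin n → ℝ) : ℕ :=
  sInf {d : ℕ | 0 < d ∧ ∀ i, ∃ m : ℤ, (d : ℝ) * y i = (m : ℝ)}

/-- The homogeneous correspondent `ỹ = den(y)·(y,1)`, viewed as a real vector. -/
noncomputable def tildeR {n : ℕ} (y : Fin n → ℝ) : Fin (n + 1) → ℝ :=
  fun i => (den y : ℝ) * (Fin.snoc y (1 : ℝ) : Fin (n + 1) → ℝ) i

/-- A rational `m`-simplex `conv(v₀,…,v_m) ⊆ ℝⁿ` is regular if the homogeneous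
correspondents `ṽ₀,…,ṽ_m ∈ ℤ^{n+1}` can be extended to a ℤ-basis of `ℤ^{n+1}`. -/
def IsRegularSimplex {n m : ℕ} (v : Fin (m + 1) → (Fin n → ℝ)) : Prop :=
  AffineIndependent ℝ v ∧ (∀ k, IsRationalPoint (v k)) ∧
  ∃ (b : Module.Basis (Fin (n + 1)) ℤ (Fin (n + 1) → ℤ)) (f : Fin (m + 1) ↪ Fin (n + 1)),
    ∀ k i, ((b (f k)) i : ℝ) = tildeR (v k) i

/-- A rational hyperplane in `ℝⁿ`. -/
def IsRatHyperplane {n : ℕ} (H : Set (Fin n → ℝ)) : Prop :=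
  ∃ (h : Fin n → ℚ) (k : ℚ), h ≠ 0 ∧ H = {z | (∑ i, (h i : ℝ) * z i) = (k : ℝ)}

/-- A rational affine space: an intersection of rational hyperplanes. -/
def IsRatAffineSpace {n : ℕ} (F : Set (Fin n → ℝ)) : Prop :=
  ∃ S : Set (Set (Fin n → ℝ)), (∀ H ∈ S, IsRatHyperplane H) ∧ F = ⋂₀ S

/-- `F_x`: the intersection of all rational hyperplanes containing `x`
(`= ℝⁿ` if there is no such hyperplane). -/
def Fx {n : ℕ} (x : Fin n → ℝ) : Set (Fin n → ℝ) :=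
  ⋂₀ {H | IsRatHyperplane H ∧ x ∈ H}

/-- The (affine) dimension of a subset of `ℝⁿ`. -/
noncomputable def affDim {n : ℕ} (F : Set (Fin n → ℝ)) : ℕ :=
  Module.finrank ℝ ↥(vectorSpan ℝ F)

/-- `d_F`: the least denominator of a rational point of `F`. -/
noncomputable def dF {n : ℕ} (F : Set (Fin n → ℝ)) : ℕ :=
  sInf {d : ℕ | ∃ y ∈ F, IsRationalPoint y ∧ den y = d}

/-- `c_F`: the smallest possible denominator of a vertex of a regular `n`-simplex
`conv(v₀,…,v_n) ⊆ ℝⁿ` with `v₀,…,v_e ∈ F`. -/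
noncomputable def cF {n : ℕ} (e : ℕ) (F : Set (Fin n → ℝ)) : ℕ :=
  sInf {c : ℕ | ∃ (v : Fin (n + 1) → (Fin n → ℝ)) (i : Fin (n + 1)),
    IsRegularSimplex v ∧ (∀ k : Fin (n + 1), (k : ℕ) ≤ e → v k ∈ F) ∧ den (v i) = c}

/-- `c_x = c_{F_x}`. -/
noncomputable def cx {n : ℕ} (x : Fin n → ℝ) : ℕ := cF (affDim (Fx x)) (Fx x)

/-- Membership in the Farey sequence `𝔉_d`. -/
def InFarey (d : ℕ) (x : ℚ) : Prop := 0 ≤ x ∧ x ≤ 1 ∧ x.den ≤ d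

/-- `x` and `y` are neighbors (contiguous elements) of the Farey sequence `𝔉_d`. -/
def FareyNeighbor (d : ℕ) (x y : ℚ) : Prop :=
  InFarey d x ∧ InFarey d y ∧ x ≠ y ∧
  ∀ t : ℚ, InFarey d t → ¬ (min x y < t ∧ t < max x y)

/-- `y` is the companion of `x`: `comp 0 = 1`, `comp 1 = 0`, `comp (1/2) = 1`, and
for denominator `d ≥ 3`, `comp x` is the neighbor of `x` in `𝔉_d` with smaller
denominator than the other neighbor. -/
def IsCompanion (x y : ℚ) : Prop :=
  (x = 0 ∧ y = 1) ∨ (x = 1 ∧ y = 0) ∨ (x = 1/2 ∧ y = 1) ∨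
  (3 ≤ x.den ∧ FareyNeighbor x.den x y ∧
    ∀ z : ℚ, FareyNeighbor x.den x z → z ≠ y → y.den < z.den)

/-!
Write `ṽ` for the integer vector `den(v)·(v,1)`. If `r = ∑ μₖ vₖ` lies in the relative interior
of the face spanned by `S`, then `r̃ = ∑ cₖ ṽₖ` with `cₖ = den(r) μₖ / den(vₖ) > 0` exactly for
`k ∈ S`, and the last coordinate gives `den(r) = ∑ cₖ den(vₖ)`. When the `ṽₖ` are part of a basis
of `ℤⁿ⁺¹`, the `cₖ` are integers, hence at least `1`, and the inequality follows.

Conversely, linearly independent vectors of `ℤⁿ⁺¹` extend to a basis as soon as their span is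
saturated. If it is not, reducing the coefficients modulo `1` yields a nonzero integer vector
`x = ∑ pₖ ṽₖ` with all `pₖ ∈ [0, 1)`. Dehomogenizing `x` gives a rational point in the relative
interior of the face `{k | pₖ ≠ 0}` whose denominator is at most
`∑ pₖ den(vₖ) < ∑_{pₖ ≠ 0} den(vₖ)`.
-/

open Set Submodule

section RelativeInterior

variable {ι k V P : Type*}

theorem AffineBasis.interior_setOf_coord_nonneg [Fintype ι] [NormedAddCommGroup V]
    [NormedSpace ℝ V] [FiniteDimensional ℝ V] [MetricSpace P] [NormedAddTorsor V P]
    (b : AffineBasis ι ℝ P) :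
    interior {y | ∀ i, 0 ≤ b.coord i y} = {y | ∀ i, 0 < b.coord i y} := by
  rcases subsingleton_or_nontrivial ι with hι | hι
  · simp
  · have hcoord : {y | ∀ i, 0 ≤ b.coord i y} = ⋂ i, b.coord i ⁻¹' Ici 0 := by ext; simp
    ext y
    simp only [hcoord, interior_iInter_of_finite,
      ← (isOpenMap_barycentric_coord b _).preimage_interior_eq_interior_preimage
        (continuous_barycentric_coord b _),
      interior_Ici, mem_iInter, mem_preimage, mem_Ioi, mem_ofPred_eq]

section AffineSpan

variable [Ring k] [AddCommGroup V] [Module k V] [AddTorsor V P] [Nonempty ι] {w : ι → P}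

def AffineIndependent.affineBasisSpan (hw : AffineIndependent k w) :
    AffineBasis ι k (affineSpan k (range w)) where
  toFun i := ⟨w i, subset_affineSpan k _ (mem_range_self i)⟩
  ind' := hw.of_comp (affineSpan k (range w)).subtype
  tot' := by
    convert affineSpan_coe_preimage_eq_top (k := k) (range w)
    ext y
    simp [Subtype.ext_iff]

theorem AffineIndependent.coe_affineCombination_affineBasisSpan (hw : AffineIndependent k w)
    {t : Finset ι} {μ : ι → k} (hμ : ∑ i ∈ t, μ i = 1) :
    ((t.affineCombination k hw.affineBasisSpan μ : affineSpan k (range w)) : P) =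
      t.affineCombination k w μ :=
  t.map_affineCombination _ μ hμ (affineSpan k (range w)).subtype

end AffineSpan

variable {E : Type*} [NormedAddCommGroup E] [NormedSpace ℝ E] {w : ι → E}

theorem AffineIndependent.preimage_convexHull_eq_setOf_coord_nonneg [Fintype ι] [Nonempty ι]
    (hw : AffineIndependent ℝ w) :
    ((↑) ⁻¹' convexHull ℝ (range w) : Set (affineSpan ℝ (range w))) =
      {y | ∀ i, 0 ≤ hw.affineBasisSpan.coord i y} := by
  set b := hw.affineBasisSpan
  ext y
  constructor
  · intro hy i
    obtain ⟨t, μ, hμ₀, hμ₁, hyμ⟩ := (convexHull_range_eq_exists_affineCombination w).subset hy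
    have hy_eq : y = t.affineCombination ℝ b μ := by
      ext
      rw [hw.coe_affineCombination_affineBasisSpan hμ₁, hyμ]
    by_cases hi : i ∈ t
    · rw [hy_eq, b.coord_apply_combination_of_mem hi hμ₁]
      exact hμ₀ i hi
    · rw [hy_eq, b.coord_apply_combination_of_notMem hi hμ₁]
  · intro hy
    rw [mem_preimage, ← b.affineCombination_coord_eq_self y,
      hw.coe_affineCombination_affineBasisSpan (b.sum_coord_apply_eq_one y)]
    exact affineCombination_mem_convexHull (fun i _ => hy i) (b.sum_coord_apply_eq_one y)

theorem AffineIndependent.mem_intrinsicInterior_convexHull_iff [Fintype ι] [Nonempty ι]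
    [FiniteDimensional ℝ E] (hw : AffineIndependent ℝ w) {x : E} :
    x ∈ intrinsicInterior ℝ (convexHull ℝ (range w)) ↔
      ∃ μ : ι → ℝ, (∀ i, 0 < μ i) ∧ ∑ i, μ i = 1 ∧ ∑ i, μ i • w i = x := by
  set b := hw.affineBasisSpan
  -- Restated for the subspace topology used by `intrinsicInterior`; the lemma itself elaborates
  -- with the (defeq) metric topology, so `rw` would not find it.
  have hint : interior {y | ∀ i, 0 ≤ b.coord i y} = {y | ∀ i, 0 < b.coord i y} :=
    b.interior_setOf_coord_nonneg
  rw [mem_intrinsicInterior, affineSpan_convexHull, hw.preimage_convexHull_eq_setOf_coord_nonneg,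
    hint]
  constructor
  · rintro ⟨y, hy, rfl⟩
    refine ⟨fun i => b.coord i y, hy, b.sum_coord_apply_eq_one y, ?_⟩
    rw [← Finset.univ.affineCombination_eq_linear_combination _ _ (b.sum_coord_apply_eq_one y),
      ← hw.coe_affineCombination_affineBasisSpan (b.sum_coord_apply_eq_one y),
      b.affineCombination_coord_eq_self]
  · rintro ⟨μ, hμ₀, hμ₁, rfl⟩
    refine ⟨Finset.univ.affineCombination ℝ b μ, fun i => ?_, ?_⟩
    · rw [b.coord_apply_combination_of_mem (Finset.mem_univ i) hμ₁]
      exact hμ₀ i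
    · rw [hw.coe_affineCombination_affineBasisSpan hμ₁,
        Finset.univ.affineCombination_eq_linear_combination _ _ hμ₁]

theorem AffineIndependent.mem_intrinsicInterior_convexHull_image_iff [Fintype ι]
    [FiniteDimensional ℝ E] (hw : AffineIndependent ℝ w) {S : Finset ι} (hS : S.Nonempty)
    {x : E} :
    x ∈ intrinsicInterior ℝ (convexHull ℝ (w '' S)) ↔
      ∃ μ : ι → ℝ, (∀ i ∈ S, 0 < μ i) ∧ (∀ i ∉ S, μ i = 0) ∧ ∑ i, μ i = 1 ∧
        ∑ i, μ i • w i = x := by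
  classical
  have : Nonempty S := hS.coe_sort
  have hwS : AffineIndependent ℝ fun i : S => w i := hw.comp_embedding (.subtype _)
  have hrange : w '' S = range fun i : S => w i := by ext; simp
  rw [hrange, hwS.mem_intrinsicInterior_convexHull_iff]
  constructor
  · rintro ⟨ν, hν₀, hν₁, hνx⟩
    set μ : ι → ℝ := fun i => if h : i ∈ S then ν ⟨i, h⟩ else 0
    have hμν (i : S) : μ i = ν i := dif_pos i.2
    have hμS (i) (hi : i ∉ S) : μ i = 0 := dif_neg hi
    refine ⟨μ, fun i hi => hμν ⟨i, hi⟩ ▸ hν₀ _, hμS, ?_, ?_⟩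
    · rw [← Finset.sum_subset S.subset_univ fun i _ hi => hμS i hi, ← S.sum_coe_sort]
      simpa only [hμν] using hν₁
    · rw [← Finset.sum_subset S.subset_univ fun i _ hi => by rw [hμS i hi, zero_smul],
        ← S.sum_coe_sort]
      simpa only [hμν] using hνx
  · rintro ⟨μ, hμ₀, hμS, hμ₁, hμx⟩
    refine ⟨fun i => μ i, fun i => hμ₀ i i.2, ?_, ?_⟩
    · rwa [← Finset.sum_subset S.subset_univ fun i _ hi => hμS i hi, ← S.sum_coe_sort] at hμ₁
    · rwa [← Finset.sum_subset S.subset_univ fun i _ hi => by rw [hμS i hi, zero_smul],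
        ← S.sum_coe_sort] at hμx

end RelativeInterior

def Submodule.IsSaturated {R M : Type*} [Semiring R] [AddCommMonoid M] [Module R M]
    (L : Submodule R M) : Prop :=
  ∀ (c : R) (x : M), c ≠ 0 → c • x ∈ L → x ∈ L

section Lattice

variable {ι κ : Type*}

theorem LinearIndependent.exists_basis_extend_of_isSaturated {R : Type*} [CommRing R]
    [IsDomain R] [IsPrincipalIdealRing R] [Finite κ] {u : ι → κ → R}
    (hu : LinearIndependent R u) (hsat : (span R (range u)).IsSaturated) :
    ∃ (b : Module.Basis κ R (κ → R)) (f : ι ↪ κ), ∀ i, b (f i) = u i := by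
  set L := span R (range u)
  have : Module.IsTorsionFree R ((κ → R) ⧸ L) := .of_smul_eq_zero fun c x hcx => by
    refine or_iff_not_imp_left.2 fun hc => ?_
    induction x using Submodule.Quotient.induction_on with | _ x => ?_
    rw [← Submodule.Quotient.mk_smul, Submodule.Quotient.mk_eq_zero] at hcx
    rw [Submodule.Quotient.mk_eq_zero]
    exact hsat c x hc hcx
  let b := (Module.Basis.span hu).sumQuot (Module.Free.chooseBasis R ((κ → R) ⧸ L))
  let e := b.indexEquiv (Pi.basisFun R κ)
  refine ⟨b.reindex e, ⟨e ∘ Sum.inl, e.injective.comp Sum.inl_injective⟩, fun i => ?_⟩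
  simp [b, Module.Basis.span_apply]

theorem isSaturated_span_of_forall_mem_Ico [Fintype ι] {u : ι → κ → ℤ}
    (h : ∀ (x : κ → ℤ) (p : ι → ℝ), (∀ k, p k ∈ Ico 0 1) →
      (fun j => (x j : ℝ)) = ∑ k, p k • (fun j => (u k j : ℝ)) → p = 0) :
    (span ℤ (range u)).IsSaturated := by
  intro c x hc hcx
  obtain ⟨a, ha⟩ := (mem_span_range_iff_exists_fun ℤ).1 hcx
  set q : ι → ℝ := fun k => a k / c
  have hq (j : κ) : ∑ k, q k * u k j = x j := by
    have := congrFun ha j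
    simp only [Finset.sum_apply, Pi.smul_apply, smul_eq_mul] at this
    simp only [q, div_mul_eq_mul_div, ← Finset.sum_div]
    rw [div_eq_iff (by exact_mod_cast hc)]
    exact_mod_cast this.trans (mul_comm _ _)
  set y := x - ∑ k, ⌊q k⌋ • u k
  have hy : (fun j => (y j : ℝ)) = ∑ k, Int.fract (q k) • (fun j => (u k j : ℝ)) := by
    ext j
    simp only [y, Pi.sub_apply, Finset.sum_apply, Pi.smul_apply, smul_eq_mul, Int.cast_sub,
      Int.cast_sum, Int.cast_mul, ← Int.self_sub_floor, sub_mul, Finset.sum_sub_distrib, hq]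
  have hp := congrFun (h y _ (fun k => ⟨Int.fract_nonneg _, Int.fract_lt_one _⟩) hy)
  simp only [hp, Pi.zero_apply, zero_smul, Finset.sum_const_zero] at hy
  have hy0 : y = 0 := by
    ext j
    simpa using congrFun hy j
  rw [sub_eq_zero] at hy0
  rw [hy0]
  exact sum_mem fun k _ => zsmul_mem (subset_span (mem_range_self k)) _

theorem linearIndependent_of_intCast {u : ι → κ → ℤ}
    (hu : LinearIndependent ℝ fun i j => (u i j : ℝ)) : LinearIndependent ℤ u :=
  (hu.restrict_scalars' ℤ).of_comp ((Int.castAddHom ℝ).toIntLinearMap.compLeft κ)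

theorem Module.Basis.linearIndependent_intCast [Fintype κ] (b : Module.Basis κ ℤ (κ → ℤ)) :
    LinearIndependent ℝ fun i j => (b i j : ℝ) := by
  classical
  let M := (Pi.basisFun ℤ κ).toMatrix b
  have : Invertible M := (Pi.basisFun ℤ κ).invertibleToMatrix b
  have hM : IsUnit (M.map (Int.cast : ℤ → ℝ)) :=
    (isUnit_of_invertible M).map (Int.castRingHom ℝ).mapMatrix
  exact Matrix.linearIndependent_cols_iff_isUnit.2 hM

theorem Module.Basis.eq_repr_of_intCast_eq_sum [Fintype ι] [Fintype κ]
    (b : Module.Basis κ ℤ (κ → ℤ)) (f : ι ↪ κ) {c : ι → ℝ} {x : κ → ℤ}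
    (hx : (fun j => (x j : ℝ)) = ∑ k, c k • fun j => (b (f k) j : ℝ)) (k : ι) :
    c k = b.repr x (f k) := by
  classical
  let B := basisOfLinearIndependentOfCardEqFinrank' _ b.linearIndependent_intCast (by simp)
  have hB (i : κ) : B i = fun j => (b i j : ℝ) := by simp [B]
  have hxB : (fun j => (x j : ℝ)) = ∑ i, (b.repr x i : ℝ) • B i := by
    conv_lhs => rw [← b.sum_repr x]
    ext j
    simp [hB, Finset.sum_apply]
  have h1 := congrArg (fun y => B.repr y (f k)) hxB
  have h2 := congrArg (fun y => B.repr y (f k)) hx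
  simp [← hB, Finsupp.single_apply] at h1 h2
  rw [← h1, h2]

end Lattice

section Denominator

variable {n : ℕ} {y : Fin n → ℝ}

theorem IsRationalPoint.den_spec (hy : IsRationalPoint y) :
    0 < den y ∧ ∀ i, ∃ m : ℤ, (den y : ℝ) * y i = m := by
  refine Nat.sInf_mem (s := {d : ℕ | 0 < d ∧ ∀ i, ∃ m : ℤ, (d : ℝ) * y i = m}) ?_
  choose q hq using hy
  refine ⟨∏ i, (q i).den, Finset.prod_pos fun i _ => (q i).pos, fun i => ?_⟩
  obtain ⟨t, ht⟩ := Finset.dvd_prod_of_mem (fun j => (q j).den) (Finset.mem_univ i)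
  refine ⟨t * (q i).num, ?_⟩
  have hnum : ((q i).den : ℝ) * q i = (q i).num := by exact_mod_cast Rat.den_mul_eq_num (q i)
  rw [hq i, ht]
  push_cast
  rw [← hnum]
  ring

theorem IsRationalPoint.cast_den_pos (hy : IsRationalPoint y) : (0 : ℝ) < den y := by
  exact_mod_cast hy.den_spec.1

theorem den_le_of_forall_mul_eq_intCast {d : ℕ} (hd : 0 < d)
    (h : ∀ i, ∃ m : ℤ, (d : ℝ) * y i = m) : den y ≤ d :=
  Nat.sInf_le ⟨hd, h⟩

@[simp]
theorem tildeR_last : tildeR y (Fin.last n) = den y := by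
  simp [tildeR]

@[simp]
theorem tildeR_castSucc (j : Fin n) : tildeR y j.castSucc = den y * y j := by
  simp [tildeR]

theorem IsRationalPoint.exists_intCast_eq_tildeR (hy : IsRationalPoint y) :
    ∃ z : Fin (n + 1) → ℤ, (fun i => (z i : ℝ)) = tildeR y := by
  choose z hz using hy.den_spec.2
  refine ⟨Fin.snoc z (den y), funext fun i => Fin.lastCases ?_ (fun j => ?_) i⟩ <;> simp [hz]

end Denominator

section Homogeneous

variable {ι : Type*} [Fintype ι] {n : ℕ} {v : ι → Fin n → ℝ}

@[simp]
theorem sum_smul_tildeR_last (c : ι → ℝ) :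
    (∑ k, c k • tildeR (v k)) (Fin.last n) = ∑ k, c k * den (v k) := by
  simp [Finset.sum_apply]

theorem sum_smul_tildeR_castSucc (c : ι → ℝ) (j : Fin n) :
    (∑ k, c k • tildeR (v k)) j.castSucc = ∑ k, c k * den (v k) * v k j := by
  simp [Finset.sum_apply, mul_assoc]

theorem linearIndependent_tildeR (hrat : ∀ k, IsRationalPoint (v k))
    (haff : AffineIndependent ℝ v) : LinearIndependent ℝ fun k => tildeR (v k) := by
  rw [Fintype.linearIndependent_iff]
  intro g hg k
  have h0 : ∑ k, g k * den (v k) = 0 := by simpa using congrFun hg (Fin.last n)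
  have h1 : ∑ k, (g k * den (v k)) • v k = 0 := funext fun j => by
    have := congrFun hg j.castSucc
    rw [sum_smul_tildeR_castSucc] at this
    simpa [Finset.sum_apply] using this
  simpa [(hrat k).cast_den_pos.ne'] using
    haff.eq_zero_of_sum_eq_zero h0 h1 k (Finset.mem_univ k)

theorem tildeR_eq_sum_smul_tildeR (hrat : ∀ k, IsRationalPoint (v k)) {r : Fin n → ℝ}
    {μ : ι → ℝ} (hμ₁ : ∑ k, μ k = 1) (hμr : ∑ k, μ k • v k = r) :
    tildeR r = ∑ k, (den r * μ k / den (v k)) • tildeR (v k) := by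
  have hc (k : ι) : den r * μ k / den (v k) * den (v k) = den r * μ k :=
    div_mul_cancel₀ _ (hrat k).cast_den_pos.ne'
  ext i
  refine Fin.lastCases ?_ (fun j => ?_) i
  · rw [sum_smul_tildeR_last, tildeR_last]
    simp [hc, ← Finset.mul_sum, hμ₁]
  · rw [sum_smul_tildeR_castSucc, tildeR_castSucc]
    simp only [hc, mul_assoc, ← Finset.mul_sum]
    simp [← hμr, Finset.sum_apply]

theorem exists_isRationalPoint_mem_intrinsicInterior_of_intCast_eq_sum
    (hrat : ∀ k, IsRationalPoint (v k)) (haff : AffineIndependent ℝ v) {S : Finset ι}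
    (hS : S.Nonempty) {p : ι → ℝ} (hpS : ∀ k ∈ S, 0 < p k) (hp0 : ∀ k ∉ S, p k = 0)
    {x : Fin (n + 1) → ℤ} (hx : (fun i => (x i : ℝ)) = ∑ k, p k • tildeR (v k)) :
    ∃ r, IsRationalPoint r ∧ r ∈ intrinsicInterior ℝ (convexHull ℝ (v '' S)) ∧
      (den r : ℝ) ≤ ∑ k, p k * den (v k) := by
  have hlast : (x (Fin.last n) : ℝ) = ∑ k, p k * den (v k) := by
    simpa using congrFun hx (Fin.last n)
  have hinit (j : Fin n) : (x j.castSucc : ℝ) = ∑ k, p k * den (v k) * v k j := by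
    rw [← sum_smul_tildeR_castSucc, ← hx]
  have hx_pos : (0 : ℝ) < x (Fin.last n) := by
    obtain ⟨k, hk⟩ := hS
    refine hlast ▸ Finset.sum_pos' (fun k _ => ?_) ⟨k, Finset.mem_univ k,
      mul_pos (hpS k hk) (hrat k).cast_den_pos⟩
    by_cases hk : k ∈ S
    · exact (mul_pos (hpS k hk) (hrat k).cast_den_pos).le
    · simp [hp0 k hk]
  set d := (x (Fin.last n)).toNat
  have hd : (d : ℝ) = x (Fin.last n) := by
    have : ((d : ℤ) : ℝ) = x (Fin.last n) := by
      rw [Int.toNat_of_nonneg (by exact_mod_cast hx_pos.le)]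
    exact_mod_cast this
  set r : Fin n → ℝ := fun j => x j.castSucc / d
  have hr_den : den r ≤ d := den_le_of_forall_mul_eq_intCast (by exact_mod_cast hd ▸ hx_pos)
    fun j => ⟨x j.castSucc, by simp [r, mul_div_cancel₀ _ (hd ▸ hx_pos).ne']⟩
  refine ⟨r, fun j => ⟨x j.castSucc / d, by simp [r]⟩, ?_, ?_⟩
  · refine (haff.mem_intrinsicInterior_convexHull_image_iff hS).2
      ⟨fun k => p k * den (v k) / d,
        fun k hk => div_pos (mul_pos (hpS k hk) (hrat k).cast_den_pos) (hd ▸ hx_pos),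
        fun k hk => by simp [hp0 k hk], ?_, ?_⟩
    · rw [← Finset.sum_div, ← hlast, hd, div_self hx_pos.ne']
    · ext j
      simp [r, hinit, Finset.sum_apply, Finset.sum_div, div_mul_eq_mul_div]
  · rw [← hlast, ← hd]
    exact_mod_cast hr_den

end Homogeneous

section Faces

variable {ι : Type*} [Fintype ι] {n : ℕ} {v : ι → Fin n → ℝ}

theorem sum_den_le_den_of_mem_intrinsicInterior (hrat : ∀ k, IsRationalPoint (v k))
    (haff : AffineIndependent ℝ v) (b : Module.Basis (Fin (n + 1)) ℤ (Fin (n + 1) → ℤ))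
    (f : ι ↪ Fin (n + 1)) (hb : ∀ k i, (b (f k) i : ℝ) = tildeR (v k) i) {S : Finset ι}
    (hS : S.Nonempty) {r : Fin n → ℝ} (hr : IsRationalPoint r)
    (hrS : r ∈ intrinsicInterior ℝ (convexHull ℝ (v '' S))) :
    ∑ k ∈ S, den (v k) ≤ den r := by
  obtain ⟨μ, hμ₀, hμS, hμ₁, hμr⟩ := (haff.mem_intrinsicInterior_convexHull_image_iff hS).1 hrS
  obtain ⟨z, hz⟩ := hr.exists_intCast_eq_tildeR
  set c : ι → ℝ := fun k => den r * μ k / den (v k)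
  have hrc : tildeR r = ∑ k, c k • tildeR (v k) := tildeR_eq_sum_smul_tildeR hrat hμ₁ hμr
  have hc_int (k : ι) : c k = b.repr z (f k) := by
    refine b.eq_repr_of_intCast_eq_sum f ?_ k
    simp only [hz, hrc, hb]
  have hc_one (k : ι) (hk : k ∈ S) : 1 ≤ c k := by
    have hpos : 0 < c k := div_pos (mul_pos hr.cast_den_pos (hμ₀ k hk)) (hrat k).cast_den_pos
    rw [hc_int] at hpos ⊢
    exact_mod_cast (Int.cast_pos.1 hpos : 0 < b.repr z (f k))
  have : (∑ k ∈ S, den (v k) : ℝ) ≤ den r := calc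
    (∑ k ∈ S, den (v k) : ℝ) ≤ ∑ k ∈ S, c k * den (v k) :=
      Finset.sum_le_sum fun k hk => le_mul_of_one_le_left (hrat k).cast_den_pos.le (hc_one k hk)
    _ = ∑ k, c k * den (v k) :=
      Finset.sum_subset S.subset_univ fun k _ hk => by simp [c, hμS k hk]
    _ = den r := by simpa using (congrFun hrc (Fin.last n)).symm
  exact_mod_cast this

theorem eq_zero_of_intCast_eq_sum_smul_tildeR (hrat : ∀ k, IsRationalPoint (v k))
    (haff : AffineIndependent ℝ v)
    (hfaces : ∀ S : Finset ι, S.Nonempty → ∀ r : Fin n → ℝ, IsRationalPoint r →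
      r ∈ intrinsicInterior ℝ (convexHull ℝ (v '' S)) → ∑ k ∈ S, den (v k) ≤ den r)
    {x : Fin (n + 1) → ℤ} {p : ι → ℝ} (hp : ∀ k, p k ∈ Ico 0 1)
    (hx : (fun i => (x i : ℝ)) = ∑ k, p k • tildeR (v k)) : p = 0 := by
  classical
  by_contra hp_ne
  set S := Finset.univ.filter (p · ≠ 0)
  have hS : S.Nonempty := by
    obtain ⟨k, hk⟩ := Function.ne_iff.1 hp_ne
    exact ⟨k, by simpa [S] using hk⟩
  have hp0 (k : ι) (hk : k ∉ S) : p k = 0 := by simpa [S] using hk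
  obtain ⟨r, hr, hrS, hr_den⟩ := exists_isRationalPoint_mem_intrinsicInterior_of_intCast_eq_sum
    hrat haff hS (fun k hk => (hp k).1.lt_of_ne' (by simpa [S] using hk)) hp0 hx
  have hle : (∑ k ∈ S, den (v k) : ℝ) ≤ den r := by exact_mod_cast hfaces S hS r hr hrS
  have hlt : ∑ k, p k * den (v k) < ∑ k ∈ S, (den (v k) : ℝ) := calc
    ∑ k, p k * den (v k) = ∑ k ∈ S, p k * den (v k) :=
      (Finset.sum_subset S.subset_univ fun k _ hk => by simp [hp0 k hk]).symm
    _ < ∑ k ∈ S, (den (v k) : ℝ) := Finset.sum_lt_sum_of_nonempty hS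
      fun k _ => mul_lt_of_lt_one_left (hrat k).cast_den_pos (hp k).2
  linarith

end Faces

theorem regular_iff_denominator_of_faces_general (n m : ℕ)
    (v : Fin (m + 1) → (Fin n → ℝ))
    (hrat : ∀ k, IsRationalPoint (v k)) (haff : AffineIndependent ℝ v) :
    IsRegularSimplex v ↔
      ∀ S : Finset (Fin (m + 1)), S.Nonempty →
        ∀ r : Fin n → ℝ, IsRationalPoint r →
          r ∈ intrinsicInterior ℝ (convexHull ℝ (v '' (S : Set (Fin (m + 1))))) →
          (∑ k ∈ S, den (v k)) ≤ den r := by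
  constructor
  · rintro ⟨-, -, b, f, hb⟩ S hS r hr hrS
    exact sum_den_le_den_of_mem_intrinsicInterior hrat haff b f hb hS hr hrS
  · intro hfaces
    choose z hz using fun k => (hrat k).exists_intCast_eq_tildeR
    have hzℝ : LinearIndependent ℝ fun k i => (z k i : ℝ) := by
      simpa only [funext hz] using linearIndependent_tildeR hrat haff
    have hsat : (span ℤ (range z)).IsSaturated := isSaturated_span_of_forall_mem_Ico
      fun x p hp hx => eq_zero_of_intCast_eq_sum_smul_tildeR hrat haff hfaces hp
        (by simpa only [hz] using hx)
    obtain ⟨b, f, hb⟩ := (linearIndependent_of_intCast hzℝ).exists_basis_extend_of_isSaturated hsat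
    exact ⟨haff, hrat, b, f, fun k i => by rw [hb, ← hz]⟩

/-- An `m`-simplex `T = conv(v₀,…,v_m) ⊆ ℝⁿ` with rational vertices
is regular iff for every nonempty face `F` of `T` and every rational point `r` in the
relative interior of `F`, `den(r)` is at least the sum of the denominators of the
vertices of `F`. -/
theorem regular_iff_denominator_of_faces (n m : ℕ) (hn : 1 ≤ n) (hm : m ≤ n)
    (v : Fin (m + 1) → (Fin n → ℝ))
    (hrat : ∀ k, IsRationalPoint (v k)) (haff : AffineIndependent ℝ v) :
    IsRegularSimplex v ↔
      ∀ S : Finset (Fin (m + 1)), S.Nonempty →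
        ∀ r : Fin n → ℝ, IsRationalPoint r →
          r ∈ intrinsicInterior ℝ (convexHull ℝ (v '' (S : Set (Fin (m + 1))))) →
          (∑ k ∈ S, den (v k)) ≤ den r :=
  regular_iff_denominator_of_faces_general n m v hrat haff
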